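/- For the Baumslag module A₁ = ℤ[x, x^{-1}, (1+x)^{-1}] over the group ring ℤQ₁ where Q₁ = ⟨q_0⟩ × ⟨q_1⟩ ≅ ℤ² acts by q_0 · a = xa and q_1 · a = (1+x)a, the annihilator of A₁ in ℤQ₁ is the principal ideal generated by q_0 + 1 - q_1. -/

import Mathlib

open scoped Classical

/-- The image of an integer polynomial in the field of rational functions `ℚ(x)`. -/
noncomputable def toRF (g : Polynomial ℤ) : RatFunc ℚ :=
  algebraMap (Polynomial ℚ) (RatFunc ℚ) (g.map (Int.castRingHom ℚ))

/-!
Multiplying by a suitable power of the unit `q₀q₁` turns every element of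
`ℤ[q₀^{±1}, q₁^{±1}]` into a polynomial `P ∈ ℤ[q₀][q₁]`, and the kernel of the map to `ℚ(x)` is
generated by the kernel of its restriction to `ℤ[q₀][q₁]`. That restriction is evaluation
`q₁ ↦ q₀ + 1` followed by the embedding `ℤ[x] ↪ ℚ(x)`, whose kernel is `(q₁ - (q₀ + 1))`.
-/

open Polynomial

theorem RingHom.ker_eq_map_ker_comp {A B C : Type*} [CommRing A] [CommRing B] [Semiring C]
    (φ : A →+* C) (θ : B →+* A) (h : ∀ a, ∃ u, IsUnit u ∧ u * a ∈ θ.range) :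
    RingHom.ker φ = (RingHom.ker (φ.comp θ)).map θ := by
  refine le_antisymm (fun a ha => ?_) ?_
  · obtain ⟨u, hu, b, hb⟩ := h a
    have hb_ker : b ∈ RingHom.ker (φ.comp θ) := by
      rw [RingHom.mem_ker, RingHom.comp_apply, hb, map_mul, RingHom.mem_ker.mp ha, mul_zero]
    rw [← Ideal.unit_mul_mem_iff_mem _ hu, ← hb]
    exact Ideal.mem_map_of_mem θ hb_ker
  · rw [← RingHom.comap_ker]
    exact Ideal.map_comap_le

theorem Polynomial.ker_eval₂RingHom_of_injective {R S : Type*} [CommRing R] [CommRing S]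
    {f : R →+* S} (hf : Function.Injective f) (a : R) :
    RingHom.ker (eval₂RingHom f (f a)) = Ideal.span {X - C a} := by
  have h : eval₂RingHom f (f a) = f.comp (evalRingHom a) := by
    ext <;> simp
  rw [h, RingHom.ker_comp_of_injective _ hf, ker_evalRingHom]

section LaurentPolynomial

variable (R : Type*) [CommRing R]

noncomputable def laurentMonomial (p : ℤ × ℤ) : MonoidAlgebra R (Multiplicative (ℤ × ℤ)) :=
  MonoidAlgebra.of R _ (Multiplicative.ofAdd p)

noncomputable def polyToLaurent : R[X][X] →+* MonoidAlgebra R (Multiplicative (ℤ × ℤ)) :=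
  eval₂RingHom (eval₂RingHom (algebraMap R _) (laurentMonomial R (1, 0)))
    (laurentMonomial R (0, 1))

variable {R}

@[simp]
theorem polyToLaurent_C_C (r : R) : polyToLaurent R (C (C r)) = algebraMap R _ r := by
  simp [polyToLaurent]

@[simp]
theorem polyToLaurent_C_X : polyToLaurent R (C X) = laurentMonomial R (1, 0) := by
  simp [polyToLaurent]

@[simp]
theorem polyToLaurent_X : polyToLaurent R X = laurentMonomial R (0, 1) := by
  simp [polyToLaurent]

theorem laurentMonomial_add (p p' : ℤ × ℤ) :
    laurentMonomial R (p + p') = laurentMonomial R p * laurentMonomial R p' := by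
  simp [laurentMonomial, ofAdd_add]

theorem laurentMonomial_nsmul (n : ℕ) (p : ℤ × ℤ) :
    laurentMonomial R (n • p) = laurentMonomial R p ^ n := by
  rw [laurentMonomial, ofAdd_nsmul, map_pow]; rfl

theorem isUnit_laurentMonomial (p : ℤ × ℤ) : IsUnit (laurentMonomial R p) :=
  (Group.isUnit _).map _

theorem laurentMonomial_mem_range {p : ℤ × ℤ} (hp : 0 ≤ p) :
    laurentMonomial R p ∈ (polyToLaurent R).range := by
  have hsplit : p = p.1.toNat • (1, 0) + p.2.toNat • (0, 1) := by
    obtain ⟨hp₁, hp₂⟩ := hp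
    ext <;> simp_all
  rw [hsplit, laurentMonomial_add, laurentMonomial_nsmul, laurentMonomial_nsmul]
  exact ⟨C X ^ p.1.toNat * X ^ p.2.toNat, by simp⟩

theorem exists_pow_mul_mem_range (z : MonoidAlgebra R (Multiplicative (ℤ × ℤ))) :
    ∃ N : ℕ, laurentMonomial R (1, 1) ^ N * z ∈ (polyToLaurent R).range := by
  have hw : laurentMonomial R (1, 1) ∈ (polyToLaurent R).range :=
    laurentMonomial_mem_range ⟨zero_le_one, zero_le_one⟩
  induction z using MonoidAlgebra.induction_on with
  | of g =>
    refine ⟨(Multiplicative.toAdd g).1.natAbs + (Multiplicative.toAdd g).2.natAbs, ?_⟩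
    change _ * laurentMonomial R (Multiplicative.toAdd g) ∈ _
    rw [← laurentMonomial_nsmul, ← laurentMonomial_add]
    apply laurentMonomial_mem_range
    constructor <;>
      simp only [Prod.fst_zero, Prod.snd_zero, Prod.fst_add, Prod.snd_add, Prod.smul_fst,
        Prod.smul_snd, nsmul_one] <;>
      omega
  | add z z' hz hz' =>
    obtain ⟨N, hN⟩ := hz
    obtain ⟨N', hN'⟩ := hz'
    refine ⟨N + N', ?_⟩
    convert add_mem (mul_mem (pow_mem hw N') hN) (mul_mem (pow_mem hw N) hN') using 1
    ring
  | smul r z hz =>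
    obtain ⟨N, hN⟩ := hz
    refine ⟨N, ?_⟩
    rw [Algebra.smul_def, mul_left_comm]
    exact mul_mem ⟨C (C r), polyToLaurent_C_C r⟩ hN

theorem exists_isUnit_mul_mem_range (z : MonoidAlgebra R (Multiplicative (ℤ × ℤ))) :
    ∃ u, IsUnit u ∧ u * z ∈ (polyToLaurent R).range :=
  let ⟨N, hN⟩ := exists_pow_mul_mem_range z
  ⟨_, (isUnit_laurentMonomial _).pow N, hN⟩

end LaurentPolynomial

noncomputable def toRFHom : ℤ[X] →+* RatFunc ℚ :=
  (algebraMap ℚ[X] (RatFunc ℚ)).comp (mapRingHom (Int.castRingHom ℚ))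

theorem toRFHom_apply (g : ℤ[X]) : toRFHom g = toRF g := rfl

theorem toRFHom_injective : Function.Injective toRFHom :=
  (IsFractionRing.injective ℚ[X] (RatFunc ℚ)).comp (map_injective _ Int.cast_injective)

/-- the annihilator of `A₁ = ℤ[x, x⁻¹, (1+x)⁻¹]` as a module over
`ℤQ₁ = ℤ[q₀^{±1}, q₁^{±1}]` (with `q₀ ↦ x`, `q₁ ↦ 1 + x`) is the principal ideal
generated by `q₀ + 1 - q₁`; i.e. the kernel of the ring map
`ℤ[q₀^{±1}, q₁^{±1}] → ℚ(x)`, `q₀^a q₁^b ↦ x^a (1+x)^b`, is `(q₀ + 1 - q₁)`. -/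
theorem stmt17
    (φ : MonoidAlgebra ℤ (Multiplicative (ℤ × ℤ)) →+* RatFunc ℚ)
    (hφ : ∀ a b : ℤ,
      φ (MonoidAlgebra.of ℤ (Multiplicative (ℤ × ℤ)) (Multiplicative.ofAdd (a, b))) =
        toRF Polynomial.X ^ a * toRF (Polynomial.X + 1) ^ b) :
    RingHom.ker φ = Ideal.span
      {MonoidAlgebra.of ℤ (Multiplicative (ℤ × ℤ)) (Multiplicative.ofAdd ((1 : ℤ), (0 : ℤ)))
        + 1 -
       MonoidAlgebra.of ℤ (Multiplicative (ℤ × ℤ)) (Multiplicative.ofAdd ((0 : ℤ), (1 : ℤ)))} := by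
  have hθ : φ.comp (polyToLaurent ℤ) = eval₂RingHom toRFHom (toRFHom (X + 1)) := by
    ext
    · simp
    all_goals
      simp only [RingHom.comp_apply, polyToLaurent_C_X, polyToLaurent_X, laurentMonomial, hφ]
      simp [toRFHom_apply]
  have hgen : polyToLaurent ℤ (X - C (X + 1)) =
      -(laurentMonomial ℤ (1, 0) + 1 - laurentMonomial ℤ (0, 1)) := by
    simp
  rw [RingHom.ker_eq_map_ker_comp φ _ exists_isUnit_mul_mem_range, hθ,
    ker_eval₂RingHom_of_injective toRFHom_injective, Ideal.map_span, Set.image_singleton, hgen,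
    Ideal.span_singleton_neg]
  rfl
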